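/- Let (c^C_{DE})_{C,D,E ∈ {1,…,n}} be scalars antisymmetric in the lower indices (c^C_{DE} = −c^C_{ED}) which are moreover unimodular, i.e. Σ_C c^C_{DC} = 0 for every D. Then for all indices A, B ∈ {1,…,n}: (1/2) Σ_{C,D,E} c^C_{DE} e^D ∧ e^E ∧ e^{(n-3)}_{ABC} = Σ_C c^C_{AB} e^{(n-1)}_C. (This is the algebraic content of the identity d(vol^{(n-2)}_{AB}) = Ω^C ∧ vol^{(n-3)}_{ABC} − c^C_{AB} vol^{(n-1)}_C used for the structure constants of the Poincaré algebra, which is unimodular.) -/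

import Mathlib

noncomputable section

variable (𝕂 : Type*) [Field 𝕂] [CharZero 𝕂] (E : Type*) [AddCommGroup E] [Module 𝕂 E]

/-- Iterated interior product: `icontr [X₁, …, X_p] α = i_{X_p}(⋯(i_{X₁} α))`; this realises
the interior product `(X₁ ∧ ⋯ ∧ X_p) ⌟ α` of a decomposable `p`-vector of the dual space
against `α`, where `i_X` contracts the first argument of `α` with `X`. -/
def icontr (L : List (Module.Dual 𝕂 E)) (α : ExteriorAlgebra 𝕂 E) : ExteriorAlgebra 𝕂 E :=
  L.foldl (fun a d => CliffordAlgebra.contractLeft d a) α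

/-- The wedge product of a list of vectors, as an element of the exterior algebra. -/
def wedgeList (v : List E) : ExteriorAlgebra 𝕂 E := (v.map (ExteriorAlgebra.ι 𝕂)).prod

variable {n : ℕ}

/-- `vol := e^1 ∧ ⋯ ∧ e^n`. -/
def volB (e : Module.Basis (Fin n) 𝕂 E) : ExteriorAlgebra 𝕂 E :=
  wedgeList 𝕂 E ((List.finRange n).map e)

/-- The dual form `e^{(n-p)}_{A₁…A_p} := (u_{A₁} ∧ ⋯ ∧ u_{A_p}) ⌟ vol`, for an arbitrary
list of indices `A₁, …, A_p`. -/
def dualFormL (e : Module.Basis (Fin n) 𝕂 E) (L : List (Fin n)) : ExteriorAlgebra 𝕂 E :=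
  icontr 𝕂 E (L.map e.dualBasis) (volB 𝕂 E e)

/-! Since `vol` has top degree, `x ∧ vol = 0`, and the Leibniz rule
`i_d (x ∧ α) = d(x) α - x ∧ i_d α` then turns `x ∧ e^{(n-p)}_{A₁…A_p}` into an alternating sum of
the forms `e^{(n-p+1)}` with one index dropped. Applied twice, `e^D ∧ e^E ∧ e^{(n-3)}_{ABC}` is a
combination of `e^{(n-1)}_A, e^{(n-1)}_B, e^{(n-1)}_C` with Kronecker coefficients, so summing it
against `c^C_{DE}` (antisymmetric in `D, E`) gives
`2 (c^C_{BC} e^{(n-1)}_A + c^C_{CA} e^{(n-1)}_B + c^C_{AB} e^{(n-1)}_C)`; after summing over `C`,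
the first two terms are traces of `c`, which vanish by unimodularity. -/

open ExteriorAlgebra CliffordAlgebra

section CommRing

variable {R M : Type*} [CommRing R] [AddCommGroup M] [Module R M]

theorem ι_mul_contractLeft (d : Module.Dual R M) (x : M) (α : ExteriorAlgebra R M) :
    ι R x * contractLeft d α = d x • α - contractLeft d (ι R x * α) := by
  rw [contractLeft_ι_mul, sub_sub_cancel]

theorem sum_sum_mul_dualBasis_sub_swap (e : Module.Basis (Fin n) R M) (m : Fin n → Fin n → R)
    (hm : ∀ D E', m D E' = -m E' D) (P Q : Fin n) :
    ∑ D : Fin n, ∑ E' : Fin n, m D E' * (e.dualBasis P (e D) * e.dualBasis Q (e E')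
      - e.dualBasis Q (e D) * e.dualBasis P (e E')) = 2 * m P Q := by
  simp only [Module.Basis.dualBasis_apply_self, mul_sub, mul_ite, mul_one, mul_zero,
    Finset.sum_sub_distrib, Finset.sum_ite_eq', Finset.mem_univ, if_true]
  rw [hm Q P]
  ring

end CommRing

section Field

variable {K V : Type*} [Field K] [AddCommGroup V] [Module K V]

theorem ι_mul_volB (e : Module.Basis (Fin n) K V) (x : V) : ι K x * volB K V e = 0 := by
  rw [← e.sum_repr x, map_sum, Finset.sum_mul]
  refine Finset.sum_eq_zero fun i _ => ?_
  rw [map_smul, smul_mul_assoc, volB, wedgeList, List.map_map, ← List.ofFn_eq_map]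
  exact smul_eq_zero_of_right _ (ι_mul_prod_list e i)

section Annihilated

variable {α : ExteriorAlgebra K V} (hα : ∀ x, ι K x * α = 0) (x : V)
include hα

theorem ι_mul_icontr_singleton (d : Module.Dual K V) :
    ι K x * icontr K V [d] α = d x • α := by
  rw [icontr, List.foldl_cons, List.foldl_nil, ι_mul_contractLeft, hα, map_zero, sub_zero]

theorem ι_mul_icontr_pair (d₁ d₂ : Module.Dual K V) :
    ι K x * icontr K V [d₁, d₂] α = d₂ x • icontr K V [d₁] α - d₁ x • icontr K V [d₂] α := by
  have h := ι_mul_icontr_singleton hα x d₁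
  simp only [icontr, List.foldl_cons, List.foldl_nil] at h ⊢
  rw [ι_mul_contractLeft, h, map_smul]

theorem ι_mul_icontr_triple (d₁ d₂ d₃ : Module.Dual K V) :
    ι K x * icontr K V [d₁, d₂, d₃] α = d₃ x • icontr K V [d₁, d₂] α
      - d₂ x • icontr K V [d₁, d₃] α + d₁ x • icontr K V [d₂, d₃] α := by
  have h := ι_mul_icontr_pair hα x d₁ d₂
  simp only [icontr, List.foldl_cons, List.foldl_nil] at h ⊢
  rw [ι_mul_contractLeft, h, map_sub, map_smul, map_smul]
  module

theorem ι_mul_ι_mul_icontr_triple (y : V) (d₁ d₂ d₃ : Module.Dual K V) :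
    ι K y * ι K x * icontr K V [d₁, d₂, d₃] α =
      (d₂ y * d₃ x - d₃ y * d₂ x) • icontr K V [d₁] α
        + (d₃ y * d₁ x - d₁ y * d₃ x) • icontr K V [d₂] α
        + (d₁ y * d₂ x - d₂ y * d₁ x) • icontr K V [d₃] α := by
  rw [mul_assoc, ι_mul_icontr_triple hα, mul_add, mul_sub, mul_smul_comm, mul_smul_comm,
    mul_smul_comm, ι_mul_icontr_pair hα, ι_mul_icontr_pair hα, ι_mul_icontr_pair hα]
  module

end Annihilated

theorem sum_sum_smul_ι_mul_ι_mul_dualFormL_triple (e : Module.Basis (Fin n) K V)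
    (m : Fin n → Fin n → K) (hm : ∀ D E', m D E' = -m E' D) (A B C : Fin n) :
    ∑ D : Fin n, ∑ E' : Fin n,
        m D E' • (ι K (e D) * ι K (e E') * dualFormL K V e [A, B, C]) =
      (2 * m B C) • dualFormL K V e [A] + (2 * m C A) • dualFormL K V e [B]
        + (2 * m A B) • dualFormL K V e [C] := by
  simp only [dualFormL, List.map_cons, List.map_nil, ι_mul_ι_mul_icontr_triple (ι_mul_volB e),
    smul_add, smul_smul, Finset.sum_add_distrib, ← Finset.sum_smul,
    sum_sum_mul_dualBasis_sub_swap e m hm]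

end Field

/-- for scalars `c^C_{DE}` antisymmetric in the lower indices and unimodular
(`Σ_C c^C_{DC} = 0` for every `D`),
`(1/2) Σ_{C,D,E} c^C_{DE} e^D ∧ e^E ∧ e^{(n-3)}_{ABC} = Σ_C c^C_{AB} e^{(n-1)}_C`. -/
theorem structure_constants_contraction_identity_unimodular
    (e : Module.Basis (Fin n) 𝕂 E) (c : Fin n → Fin n → Fin n → 𝕂)
    (hanti : ∀ C D E' : Fin n, c C D E' = - c C E' D)
    (huni : ∀ D : Fin n, ∑ C : Fin n, c C D C = 0) (A B : Fin n) :
    ((1 : 𝕂) / 2) • ∑ C : Fin n, ∑ D : Fin n, ∑ E' : Fin n,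
        c C D E' •
          (ExteriorAlgebra.ι 𝕂 (e D) * ExteriorAlgebra.ι 𝕂 (e E') * dualFormL 𝕂 E e [A, B, C])
      = ∑ C : Fin n, c C A B • dualFormL 𝕂 E e [C] := by
  have hA : ∑ C : Fin n, c C C A = 0 := by
    simp only [hanti _ _ A, Finset.sum_neg_distrib, huni, neg_zero]
  simp only [sum_sum_smul_ι_mul_ι_mul_dualFormL_triple e _ (hanti _), Finset.sum_add_distrib,
    ← Finset.sum_smul, ← Finset.mul_sum, huni B, hA, mul_zero, zero_smul, zero_add,
    Finset.smul_sum, smul_smul, ← mul_assoc]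
  norm_num
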